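/- If the Ellis enveloping semigroup E(Ω,φ) is metrizable, then every operator in G(Ω,φ) is determined by its values on Dirac measures: whenever T₁, T₂ ∈ G(Ω,φ) satisfy T₁δ(ω) = T₂δ(ω) for all ω ∈ Ω, one has T₁ = T₂. -/

import Mathlib

open MeasureTheory Filter Topology

/-- The pairing `⟨f, μ⟩ = ∫ f dμ` of a function with a finite signed Borel measure,
defined via the Jordan decomposition of the signed measure. -/
noncomputable def spair {Ω : Type*} [MeasurableSpace Ω] (f : Ω → ℝ) (μ : SignedMeasure Ω) : ℝ :=
  (∫ ω, f ω ∂μ.toJordanDecomposition.posPart) - (∫ ω, f ω ∂μ.toJordanDecomposition.negPart)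

/-- The weak* topology on the space `X*` of finite signed Borel measures, i.e. the topology
of convergence of the pairings with all continuous functions `x ∈ C(Ω, ℝ)`. With this topology
on the codomain, the product topology on `SignedMeasure Ω → SignedMeasure Ω` is precisely the
weak* operator topology (pointwise convergence with `X*` in its weak* topology). -/
noncomputable instance weakStarTopology {Ω : Type*} [TopologicalSpace Ω] [MeasurableSpace Ω] :
    TopologicalSpace (SignedMeasure Ω) :=
  TopologicalSpace.induced (fun μ => fun x : C(Ω, ℝ) => spair (⇑x) μ) inferInstance

/-- The operator `V : X* → X*`, pushforward by `φ`: `(Vμ)(e) = μ(φ⁻¹ e)`. -/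
noncomputable def Vop {Ω : Type*} [MeasurableSpace Ω] (φ : Ω → Ω) :
    SignedMeasure Ω → SignedMeasure Ω :=
  fun μ => μ.map φ

/-- The Dirac measure at `ω`, as a signed measure. -/
noncomputable def diracSM {Ω : Type*} [MeasurableSpace Ω] (ω : Ω) : SignedMeasure Ω :=
  (Measure.dirac ω).toSignedMeasure

/-- `Γ(Ω,φ)`: the closure of `{Vⁿ : n ≥ 0}` in the weak* operator topology. -/
def GammaSG {Ω : Type*} [TopologicalSpace Ω] [MeasurableSpace Ω] (φ : Ω → Ω) :
    Set (SignedMeasure Ω → SignedMeasure Ω) :=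
  closure (Set.range fun n : ℕ => (Vop φ)^[n])

/-- `G(Ω,φ)`: the closure of the convex hull of `{Vⁿ : n ≥ 0}` in the weak* operator topology. -/
def GSG {Ω : Type*} [TopologicalSpace Ω] [MeasurableSpace Ω] (φ : Ω → Ω) :
    Set (SignedMeasure Ω → SignedMeasure Ω) :=
  closure (convexHull ℝ (Set.range fun n : ℕ => (Vop φ)^[n]))

/-- The kernel `L = {Q ∈ G(Ω,φ) : V ∘ Q = Q}` of the semigroup `G(Ω,φ)`. -/
def Lker {Ω : Type*} [TopologicalSpace Ω] [MeasurableSpace Ω] (φ : Ω → Ω) :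
    Set (SignedMeasure Ω → SignedMeasure Ω) :=
  {Q ∈ GSG φ | Vop φ ∘ Q = Q}

/-- The Ellis enveloping semigroup `E(Ω,φ)`: the closure of the iterates `{φⁿ : n ≥ 0}`
in the product topology (pointwise convergence) on `Ω → Ω`. -/
def EllisE {Ω : Type*} [TopologicalSpace Ω] (φ : Ω → Ω) : Set (Ω → Ω) :=
  closure (Set.range fun n : ℕ => φ^[n])

/-- `E_b(Ω,φ)`: the smallest set of self-maps of `Ω` containing the iterates `{φⁿ : n ≥ 0}`
and sequentially closed under pointwise convergence. -/
inductive Eb {Ω : Type*} [TopologicalSpace Ω] (φ : Ω → Ω) : (Ω → Ω) → Prop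
  | iterate (n : ℕ) : Eb φ φ^[n]
  | lim (p : ℕ → Ω → Ω) (q : Ω → Ω) (hp : ∀ k, Eb φ (p k))
      (hq : ∀ ω, Tendsto (fun k => p k ω) atTop (𝓝 (q ω))) : Eb φ q

/-- `E₁(Ω,φ)`: the set of pointwise limits of sequences of iterates `φ^{n_k}`. -/
def E1SG {Ω : Type*} [TopologicalSpace Ω] (φ : Ω → Ω) : Set (Ω → Ω) :=
  {p | ∃ n : ℕ → ℕ, ∀ ω, Tendsto (fun k => φ^[n k] ω) atTop (𝓝 (p ω))}

/-- An operator `P ∈ Γ(Ω,φ)` with `p = πP` is regular if `p` is Borel measurable and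
`(Pμ)(e) = μ(p⁻¹ e)` for every Borel probability measure `μ` and Borel set `e`. -/
def RegularOperator {Ω : Type*} [TopologicalSpace Ω] [MeasurableSpace Ω]
    (P : SignedMeasure Ω → SignedMeasure Ω) (p : Ω → Ω) : Prop :=
  Measurable p ∧ ∀ (μ : Measure Ω) [IsProbabilityMeasure μ],
    ∀ e : Set Ω, MeasurableSet e → P μ.toSignedMeasure e = (μ (p ⁻¹' e)).toReal

/-- A minimal set of the semicascade `(Ω,φ)`: a nonempty closed `φ`-invariant set containing
no proper nonempty closed `φ`-invariant subset. -/
def IsMinimalSet {Ω : Type*} [TopologicalSpace Ω] (φ : Ω → Ω) (m : Set Ω) : Prop :=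
  m.Nonempty ∧ IsClosed m ∧ Set.MapsTo φ m m ∧
    ∀ m' ⊆ m, m'.Nonempty → IsClosed m' → Set.MapsTo φ m' m' → m' = m

/-- The orbit closure of a point `ω`: the closure of the trajectory `{φⁿ ω : n ≥ 0}`. -/
def orbitClosure {Ω : Type*} [TopologicalSpace Ω] (φ : Ω → Ω) (ω : Ω) : Set Ω :=
  closure (Set.range fun n : ℕ => φ^[n] ω)

/-- A `φ`-ergodic measure: a `φ`-invariant Borel probability measure `μ` such that
`μ(e) ∈ {0,1}` for every Borel set `e` with `φ⁻¹ e = e`. -/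
def IsErgodicMeasure {Ω : Type*} [MeasurableSpace Ω] (φ : Ω → Ω) (μ : Measure Ω) : Prop :=
  IsProbabilityMeasure μ ∧ (∀ e : Set Ω, MeasurableSet e → μ (φ ⁻¹' e) = μ e) ∧
    (∀ e : Set Ω, MeasurableSet e → φ ⁻¹' e = e → μ e = 0 ∨ μ e = 1)

/-- The support of a Borel measure: the smallest closed set of full measure
(the intersection of all closed sets of full measure). -/
def msupp {Ω : Type*} [TopologicalSpace Ω] [MeasurableSpace Ω] (μ : Measure Ω) : Set Ω :=
  ⋂₀ {s : Set Ω | IsClosed s ∧ μ sᶜ = 0}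

/-- The semicascade `(Ω,φ)` is tame: for every continuous `x` and every strictly increasing
sequence `n(1) < n(2) < ⋯`, the infimum over finitely supported real coefficients `a` with
`Σ|aₖ| = 1` of the sup-norms `‖Σₖ aₖ · (x ∘ φ^{n(k)})‖` is `0`. -/
def Tame {Ω : Type*} [TopologicalSpace Ω] [CompactSpace Ω] (φ : Ω → Ω)
    (hφ : Continuous φ) : Prop :=
  ∀ (x : C(Ω, ℝ)) (n : ℕ → ℕ), StrictMono n →
    sInf {r : ℝ | ∃ a : ℕ →₀ ℝ, (∑ k ∈ a.support, |a k|) = 1 ∧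
      r = ‖∑ k ∈ a.support, a k • x.comp ⟨φ^[n k], hφ.iterate (n k)⟩‖} = 0

/-- Points `a, b` are proximal: `inf_{n ≥ 0} d(φⁿ a, φⁿ b) = 0`. -/
def Proximal {Ω : Type*} [PseudoMetricSpace Ω] (φ : Ω → Ω) (a b : Ω) : Prop :=
  (⨅ n : ℕ, dist (φ^[n] a) (φ^[n] b)) = 0

variable {Ω : Type*} [TopologicalSpace Ω] [CompactSpace Ω] [TopologicalSpace.MetrizableSpace Ω]
  [Nonempty Ω] [MeasurableSpace Ω] [BorelSpace Ω]

/-!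
Fix `x ∈ C(Ω, ℝ)` and `T ∈ G(Ω,φ)`, and put `y(ω) = ⟨x, T δ(ω)⟩`; the point is that
`⟨x, Tμ⟩ = ⟨y, μ⟩` for every `μ`.

For a convex combination `Q` of iterates `Vⁿ` one has `⟨x, Qμ⟩ = ⟨v, μ⟩`, where `v` is the same
convex combination of the functions `x ∘ φⁿ`. Such `v` are bounded by `‖x‖` and `1`-Lipschitz for
the pseudometric `d(ω, ω') = sup_{q ∈ E} |x(qω) - x(qω')|`, and by closedness so is `y`. If
`E = E(Ω,φ)` is metrizable it is compact metrizable, so `C(E, ℝ)` is separable and `(Ω, d)` has a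
dense sequence `(ω_m)`. Only countably many weak* coordinates are then involved, so `T` is the limit
of a *sequence* `Q_k` of convex combinations along them. The corresponding `v_k` converge to `y` at
every `ω_m`, hence everywhere by equicontinuity, and dominated convergence gives
`⟨x, Q_k μ⟩ → ⟨y, μ⟩`.
-/

section Metric

variable {α E : Type*} [PseudoMetricSpace E]

theorem exists_seq_forall_exists_dist_lt [Nonempty α] [SecondCountableTopology E] (j : α → E) :
    ∃ g : ℕ → α, ∀ a, ∀ ε > 0, ∃ m, dist (j a) (j (g m)) < ε := by
  obtain ⟨u, hu⟩ := TopologicalSpace.exists_dense_seq (Set.range j)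
  refine ⟨fun m => (u m).2.choose, fun a ε hε => ?_⟩
  obtain ⟨m, hm⟩ := Metric.denseRange_iff.1 hu ⟨j a, a, rfl⟩ ε hε
  exact ⟨m, by rwa [(u m).2.choose_spec]⟩

theorem tendsto_of_dist_le_of_tendsto_dense_seq {β : Type*} [PseudoMetricSpace β] {j : α → E}
    {F : ℕ → α → β} {f : α → β} (hF : ∀ k a b, dist (F k a) (F k b) ≤ dist (j a) (j b))
    (hf : ∀ a b, dist (f a) (f b) ≤ dist (j a) (j b)) {g : ℕ → α}
    (hg : ∀ a, ∀ ε > 0, ∃ m, dist (j a) (j (g m)) < ε)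
    (hlim : ∀ m, Tendsto (fun k => F k (g m)) atTop (𝓝 (f (g m)))) (a : α) :
    Tendsto (fun k => F k a) atTop (𝓝 (f a)) := by
  rw [Metric.tendsto_atTop]
  intro ε hε
  obtain ⟨m, hm⟩ := hg a (ε / 3) (by positivity)
  obtain ⟨N, hN⟩ := Metric.tendsto_atTop.1 (hlim m) (ε / 3) (by positivity)
  refine ⟨N, fun k hk => ?_⟩
  have h₁ := (hF k a (g m)).trans_lt hm
  have h₂ := hN k hk
  have h₃ := (hf (g m) a).trans_lt (dist_comm (j a) (j (g m)) ▸ hm)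
  linarith [dist_triangle4 (F k a) (F k (g m)) (f (g m)) (f a)]

end Metric

section Jordan

variable {Ω : Type*} [MeasurableSpace Ω]

theorem MeasureTheory.SignedMeasure.posPart_sub_negPart (μ : SignedMeasure Ω) :
    μ.toJordanDecomposition.posPart.toSignedMeasure
      - μ.toJordanDecomposition.negPart.toSignedMeasure = μ :=
  μ.toSignedMeasure_toJordanDecomposition

theorem spair_smul (f : Ω → ℝ) (r : ℝ) (μ : SignedMeasure Ω) :
    spair f (r • μ) = r * spair f μ := by
  simp only [spair, SignedMeasure.toJordanDecomposition_smul_real]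
  rcases le_or_gt 0 r with hr | hr
  · rw [JordanDecomposition.real_smul_posPart_nonneg _ _ hr,
      JordanDecomposition.real_smul_negPart_nonneg _ _ hr, integral_smul_nnreal_measure,
      integral_smul_nnreal_measure, NNReal.smul_def, NNReal.smul_def, Real.coe_toNNReal _ hr,
      smul_eq_mul, smul_eq_mul]
    ring
  · rw [JordanDecomposition.real_smul_posPart_neg _ _ hr,
      JordanDecomposition.real_smul_negPart_neg _ _ hr, integral_smul_nnreal_measure,
      integral_smul_nnreal_measure, NNReal.smul_def, NNReal.smul_def,
      Real.coe_toNNReal _ (neg_nonneg.2 hr.le), smul_eq_mul, smul_eq_mul]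
    ring

theorem MeasureTheory.Measure.toSignedMeasure_map {Ω' : Type*} [MeasurableSpace Ω'] (m : Measure Ω')
    [IsFiniteMeasure m] {f : Ω' → Ω} (hf : Measurable f) :
    m.toSignedMeasure.map f = (m.map f).toSignedMeasure := by
  ext s hs
  rw [VectorMeasure.map_apply _ hf hs, Measure.toSignedMeasure_apply_measurable (hf hs),
    Measure.toSignedMeasure_apply_measurable hs, measureReal_def, measureReal_def,
    Measure.map_apply hf hs]

theorem smul_spair (c : ℝ) (f : Ω → ℝ) (μ : SignedMeasure Ω) :
    spair (c • f) μ = c * spair f μ := by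
  simp only [spair, Pi.smul_apply, smul_eq_mul, integral_const_mul]
  ring

end Jordan

section Pairing

variable {Ω : Type*} [TopologicalSpace Ω] [CompactSpace Ω] [MeasurableSpace Ω]
  [OpensMeasurableSpace Ω]

theorem ContinuousMap.integrable_of_compactSpace (x : C(Ω, ℝ)) (μ : Measure Ω)
    [IsFiniteMeasure μ] : Integrable x μ :=
  x.continuous.integrable_of_hasCompactSupport (.of_compactSpace _)

theorem spair_toSignedMeasure_sub (x : C(Ω, ℝ)) (p n : Measure Ω) [IsFiniteMeasure p]
    [IsFiniteMeasure n] :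
    spair x (p.toSignedMeasure - n.toSignedMeasure) = ∫ ω, x ω ∂p - ∫ ω, x ω ∂n := by
  set ξ := p.toSignedMeasure - n.toSignedMeasure
  set P := ξ.toJordanDecomposition.posPart
  set N := ξ.toJordanDecomposition.negPart
  have hPn : P + n = p + N := by
    rw [← Measure.toSignedMeasure_eq_toSignedMeasure_iff, Measure.toSignedMeasure_add,
      Measure.toSignedMeasure_add, ← sub_eq_sub_iff_add_eq_add]
    exact ξ.toSignedMeasure_toJordanDecomposition
  have hint := congrArg (fun m => ∫ ω, x ω ∂m) hPn
  simp only [integral_add_measure (x.integrable_of_compactSpace _)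
    (x.integrable_of_compactSpace _)] at hint
  change ∫ ω, x ω ∂P - ∫ ω, x ω ∂N = _
  linarith

theorem spair_toSignedMeasure (x : C(Ω, ℝ)) (m : Measure Ω) [IsFiniteMeasure m] :
    spair x m.toSignedMeasure = ∫ ω, x ω ∂m := by
  simpa using spair_toSignedMeasure_sub x m 0

theorem spair_diracSM (x : C(Ω, ℝ)) (ω : Ω) : spair x (diracSM ω) = x ω := by
  rw [diracSM, spair_toSignedMeasure, integral_dirac' _ _ x.continuous.stronglyMeasurable]

theorem spair_add (x : C(Ω, ℝ)) (μ ν : SignedMeasure Ω) :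
    spair x (μ + ν) = spair x μ + spair x ν := by
  conv_lhs => rw [← SignedMeasure.posPart_sub_negPart μ, ← SignedMeasure.posPart_sub_negPart ν,
    sub_add_sub_comm,
    ← Measure.toSignedMeasure_add, ← Measure.toSignedMeasure_add, spair_toSignedMeasure_sub,
    integral_add_measure (x.integrable_of_compactSpace _) (x.integrable_of_compactSpace _),
    integral_add_measure (x.integrable_of_compactSpace _) (x.integrable_of_compactSpace _)]
  simp only [spair]
  ring

theorem add_spair (x y : C(Ω, ℝ)) (μ : SignedMeasure Ω) :
    spair ⇑(x + y) μ = spair x μ + spair y μ := by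
  simp only [spair, ContinuousMap.coe_add, Pi.add_apply,
    integral_add (x.integrable_of_compactSpace _) (y.integrable_of_compactSpace _)]
  ring

noncomputable def spairBilin : C(Ω, ℝ) →ₗ[ℝ] SignedMeasure Ω →ₗ[ℝ] ℝ :=
  LinearMap.mk₂ ℝ (fun x μ => spair x μ) add_spair (fun c x μ => smul_spair c x μ) spair_add
    (fun r x μ => spair_smul x r μ)

theorem spair_map {Ω' : Type*} [MeasurableSpace Ω'] (x : C(Ω, ℝ)) {f : Ω' → Ω}
    (hf : Measurable f) (μ : SignedMeasure Ω') : spair x (μ.map f) = spair (x ∘ f) μ := by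
  conv_lhs => rw [← SignedMeasure.posPart_sub_negPart μ, ← VectorMeasure.mapGm_apply, map_sub,
    VectorMeasure.mapGm_apply, VectorMeasure.mapGm_apply, Measure.toSignedMeasure_map _ hf,
    Measure.toSignedMeasure_map _ hf, spair_toSignedMeasure_sub,
    integral_map hf.aemeasurable x.continuous.aestronglyMeasurable,
    integral_map hf.aemeasurable x.continuous.aestronglyMeasurable]
  rfl

theorem tendsto_spair_of_tendsto {v : ℕ → C(Ω, ℝ)} {y : Ω → ℝ} {C : ℝ} (hC : ∀ k, ‖v k‖ ≤ C)
    (hlim : ∀ ω, Tendsto (fun k => v k ω) atTop (𝓝 (y ω))) (μ : SignedMeasure Ω) :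
    Tendsto (fun k => spair (v k) μ) atTop (𝓝 (spair y μ)) := by
  have hdom (m : Measure Ω) [IsFiniteMeasure m] :
      Tendsto (fun k => ∫ ω, v k ω ∂m) atTop (𝓝 (∫ ω, y ω ∂m)) :=
    tendsto_integral_of_dominated_convergence (fun _ => C)
      (fun k => (v k).continuous.aestronglyMeasurable) (integrable_const C)
      (fun k => ae_of_all _ fun ω => ((v k).norm_coe_le_norm ω).trans (hC k)) (ae_of_all _ hlim)
  exact (hdom _).sub (hdom _)

end Pairing

section WeakStar

variable {Ω : Type*} [TopologicalSpace Ω] [MeasurableSpace Ω]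

theorem continuous_spair (x : C(Ω, ℝ)) :
    Continuous fun μ : SignedMeasure Ω => spair x μ :=
  (continuous_apply x).comp <|
    continuous_induced_dom (f := fun μ : SignedMeasure Ω => fun y : C(Ω, ℝ) => spair y μ)

theorem exists_seq_tendsto_spair_of_mem_closure {ι : Type*} [Countable ι]
    {S : Set (SignedMeasure Ω → SignedMeasure Ω)} {T : SignedMeasure Ω → SignedMeasure Ω}
    (hT : T ∈ closure S) (x : C(Ω, ℝ)) (ν : ι → SignedMeasure Ω) :
    ∃ Q : ℕ → SignedMeasure Ω → SignedMeasure Ω, (∀ k, Q k ∈ S) ∧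
      ∀ i, Tendsto (fun k => spair x (Q k (ν i))) atTop (𝓝 (spair x (T (ν i)))) := by
  let ρ : (SignedMeasure Ω → SignedMeasure Ω) → ι → ℝ := fun Q i => spair x (Q (ν i))
  have hρ : Continuous ρ :=
    continuous_pi fun i => (continuous_spair x).comp (continuous_apply (ν i))
  obtain ⟨u, hu, hlim⟩ := mem_closure_iff_seq_limit.1 (mem_closure_image hρ.continuousAt hT)
  choose Q hQ hQu using hu
  refine ⟨Q, hQ, fun i => ?_⟩
  simpa only [← hQu] using tendsto_pi_nhds.1 hlim i

theorem MeasureTheory.SignedMeasure.ext_of_forall_spair_eq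
    [TopologicalSpace.PseudoMetrizableSpace Ω] [BorelSpace Ω] {μ ν : SignedMeasure Ω}
    (h : ∀ x : C(Ω, ℝ), spair x μ = spair x ν) : μ = ν := by
  set P₁ := μ.toJordanDecomposition.posPart
  set N₁ := μ.toJordanDecomposition.negPart
  set P₂ := ν.toJordanDecomposition.posPart
  set N₂ := ν.toJordanDecomposition.negPart
  have hmeas : P₁ + N₂ = P₂ + N₁ := by
    refine ext_of_forall_integral_eq_of_IsFiniteMeasure fun f => ?_
    have hf := h f.toContinuousMap
    rw [integral_add_measure (f.integrable _) (f.integrable _),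
      integral_add_measure (f.integrable _) (f.integrable _)]
    change ∫ ω, f ω ∂P₁ - ∫ ω, f ω ∂N₁ = ∫ ω, f ω ∂P₂ - ∫ ω, f ω ∂N₂ at hf
    linarith
  rw [← SignedMeasure.posPart_sub_negPart μ, ← SignedMeasure.posPart_sub_negPart ν,
    sub_eq_sub_iff_add_eq_add, ← Measure.toSignedMeasure_add, ← Measure.toSignedMeasure_add,
    Measure.toSignedMeasure_eq_toSignedMeasure_iff, hmeas]

end WeakStar

section Ellis

variable {Ω : Type*} [TopologicalSpace Ω]

theorem iterate_mem_ellisE (φ : Ω → Ω) (n : ℕ) : φ^[n] ∈ EllisE φ :=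
  subset_closure ⟨n, rfl⟩

def ellisEval (φ : Ω → Ω) (x : C(Ω, ℝ)) (ω : Ω) : C(EllisE φ, ℝ) :=
  ⟨fun q => x (q.1 ω), x.continuous.comp ((continuous_apply ω).comp continuous_subtype_val)⟩

variable [CompactSpace Ω]

instance (φ : Ω → Ω) : CompactSpace (EllisE φ) :=
  isCompact_iff_compactSpace.mp isClosed_closure.isCompact

theorem norm_le_of_mem_convexHull_comp_iterate {φ : Ω → Ω} (hφ : Continuous φ) {x v : C(Ω, ℝ)}
    (hv : v ∈ convexHull ℝ (Set.range fun n : ℕ => x.comp ⟨φ^[n], hφ.iterate n⟩)) :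
    ‖v‖ ≤ ‖x‖ := by
  have hsub :
      (Set.range fun n : ℕ => x.comp ⟨φ^[n], hφ.iterate n⟩) ⊆ Metric.closedBall 0 ‖x‖ := by
    rintro _ ⟨n, rfl⟩
    rw [mem_closedBall_zero_iff]
    exact (ContinuousMap.norm_le _ (norm_nonneg x)).2 fun ω => x.norm_coe_le_norm _
  simpa using convexHull_min hsub (convex_closedBall 0 ‖x‖) hv

theorem dist_le_dist_ellisEval_of_mem_convexHull {φ : Ω → Ω} (hφ : Continuous φ)
    {x v : C(Ω, ℝ)}
    (hv : v ∈ convexHull ℝ (Set.range fun n : ℕ => x.comp ⟨φ^[n], hφ.iterate n⟩)) (ω ω' : Ω) :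
    dist (v ω) (v ω') ≤ dist (ellisEval φ x ω) (ellisEval φ x ω') := by
  set c := dist (ellisEval φ x ω) (ellisEval φ x ω')
  have hconvex : Convex ℝ {v : C(Ω, ℝ) | dist (v ω) (v ω') ≤ c} := by
    have := (convex_closedBall (0 : ℝ) c).linear_preimage
      (ContinuousMap.evalCLM ℝ ω - ContinuousMap.evalCLM ℝ ω' : C(Ω, ℝ) →L[ℝ] ℝ).toLinearMap
    simpa [Set.preimage, dist_eq_norm] using this
  refine convexHull_min ?_ hconvex hv
  rintro _ ⟨n, rfl⟩
  exact ContinuousMap.dist_apply_le_dist (f := ellisEval φ x ω) (g := ellisEval φ x ω')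
    ⟨φ^[n], iterate_mem_ellisE φ n⟩

end Ellis

section Dynamics

variable {Ω : Type*} [TopologicalSpace Ω] [CompactSpace Ω] [MeasurableSpace Ω] [BorelSpace Ω]

theorem spair_iterate_Vop {φ : Ω → Ω} (hφ : Continuous φ) (x : C(Ω, ℝ)) (n : ℕ)
    (μ : SignedMeasure Ω) : spair x ((Vop φ)^[n] μ) = spair (x ∘ φ^[n]) μ := by
  induction n generalizing μ with
  | zero => rfl
  | succ n ih =>
    rw [Function.iterate_succ_apply, ih, Function.iterate_succ]
    exact spair_map (x.comp ⟨φ^[n], hφ.iterate n⟩) hφ.measurable μ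

theorem exists_mem_convexHull_spair_eq {φ : Ω → Ω} (hφ : Continuous φ) (x : C(Ω, ℝ))
    {Q : SignedMeasure Ω → SignedMeasure Ω}
    (hQ : Q ∈ convexHull ℝ (Set.range fun n : ℕ => (Vop φ)^[n])) :
    ∃ v ∈ convexHull ℝ (Set.range fun n : ℕ => x.comp ⟨φ^[n], hφ.iterate n⟩),
      ∀ μ, spair x (Q μ) = spair v μ := by
  let Ψ := (spairBilin x).compLeft (SignedMeasure Ω)
  let Φ := LinearMap.ltoFun ℝ (SignedMeasure Ω) ℝ ℝ ∘ₗ spairBilin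
  have hΨΦ : Ψ '' convexHull ℝ (Set.range fun n : ℕ => (Vop φ)^[n]) =
      Φ '' convexHull ℝ (Set.range fun n : ℕ => x.comp ⟨φ^[n], hφ.iterate n⟩) := by
    rw [LinearMap.image_convexHull, LinearMap.image_convexHull, ← Set.range_comp,
      ← Set.range_comp]
    congr 2
    funext n μ
    exact spair_iterate_Vop hφ x n μ
  obtain ⟨v, hv, hvQ⟩ := hΨΦ ▸ Set.mem_image_of_mem Ψ hQ
  exact ⟨v, hv, fun μ => (congrFun hvQ μ).symm⟩

theorem dist_spair_dirac_le {φ : Ω → Ω} (hφ : Continuous φ)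
    {T : SignedMeasure Ω → SignedMeasure Ω} (hT : T ∈ GSG φ) (x : C(Ω, ℝ)) (ω ω' : Ω) :
    dist (spair x (T (diracSM ω))) (spair x (T (diracSM ω'))) ≤
      dist (ellisEval φ x ω) (ellisEval φ x ω') := by
  set c := dist (ellisEval φ x ω) (ellisEval φ x ω')
  have hclosed : IsClosed {Q : SignedMeasure Ω → SignedMeasure Ω |
      dist (spair x (Q (diracSM ω))) (spair x (Q (diracSM ω'))) ≤ c} :=
    isClosed_le (((continuous_spair x).comp (continuous_apply (diracSM ω))).dist
      ((continuous_spair x).comp (continuous_apply (diracSM ω')))) continuous_const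
  refine closure_minimal (fun Q hQ => ?_) hclosed hT
  obtain ⟨v, hv, hvQ⟩ := exists_mem_convexHull_spair_eq hφ x hQ
  simp only [Set.mem_ofPred_eq, hvQ, spair_diracSM]
  exact dist_le_dist_ellisEval_of_mem_convexHull hφ hv ω ω'

theorem spair_apply_eq_spair_dirac [Nonempty Ω] {φ : Ω → Ω} (hφ : Continuous φ)
    [TopologicalSpace.MetrizableSpace (EllisE φ)] {T : SignedMeasure Ω → SignedMeasure Ω}
    (hT : T ∈ GSG φ) (x : C(Ω, ℝ)) (μ : SignedMeasure Ω) :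
    spair x (T μ) = spair (fun ω => spair x (T (diracSM ω))) μ := by
  obtain ⟨g, hg⟩ := exists_seq_forall_exists_dist_lt (ellisEval φ x)
  obtain ⟨Q, hQ, hQlim⟩ := exists_seq_tendsto_spair_of_mem_closure hT x
    (fun i : Option ℕ => i.elim μ fun m => diracSM (g m))
  choose v hv hvQ using fun k => exists_mem_convexHull_spair_eq hφ x (hQ k)
  have hdense (m : ℕ) :
      Tendsto (fun k => v k (g m)) atTop (𝓝 (spair x (T (diracSM (g m))))) := by
    simpa only [Option.elim, hvQ, spair_diracSM] using hQlim (some m)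
  have hpointwise := tendsto_of_dist_le_of_tendsto_dense_seq
    (fun k => dist_le_dist_ellisEval_of_mem_convexHull hφ (hv k)) (dist_spair_dirac_le hφ hT x)
    hg hdense
  refine tendsto_nhds_unique ?_ (tendsto_spair_of_tendsto
    (fun k => norm_le_of_mem_convexHull_comp_iterate hφ (hv k)) hpointwise μ)
  simpa only [Option.elim, hvQ] using hQlim none

end Dynamics

/-- (a1) ⇒ (a4): if `E(Ω,φ)` is metrizable, then every operator `T ∈ G(Ω,φ)` is determined
by its values on the Dirac measures. -/
theorem stmt_9 (φ : Ω → Ω) (hφ : Continuous φ)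
    (hmet : TopologicalSpace.MetrizableSpace (EllisE φ))
    (T₁ T₂ : SignedMeasure Ω → SignedMeasure Ω) (h₁ : T₁ ∈ GSG φ) (h₂ : T₂ ∈ GSG φ)
    (h : ∀ ω : Ω, T₁ (diracSM ω) = T₂ (diracSM ω)) :
    T₁ = T₂ := by
  funext μ
  refine SignedMeasure.ext_of_forall_spair_eq fun x => ?_
  rw [spair_apply_eq_spair_dirac hφ h₁, spair_apply_eq_spair_dirac hφ h₂]
  simp only [h]
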